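/- For real b_i, a_{i1}, a_{i2} (i = 1,...,k) defining the symmetric 4-stage compositions S_{a h}∘S_{(1/2-a)h}∘S_{(1/2-a)h}∘S_{a h}, the polynomial identity 20·w31(a) - 144·w51(a) + 80·w31(a)·g(a) cannot circumvent the relation 20·G_31 - 144·G_51 + 80·G̃_63 = 1 whenever G_00 = 1; in particular there is no choice of coefficients with G_31 = G_51 = G̃_63 = 0 simultaneously. -/

import Mathlib

noncomputable section
open Finset

/-- Coefficient of `Y₃` for the symmetric 4-stage composition
`S_{ah}∘S_{(1/2-a)h}∘S_{(1/2-a)h}∘S_{ah}`. -/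
def w31 (a : ℝ) : ℝ := 2 * a^3 + 2 * (1/2 - a)^3

/-- Coefficient of `Y₅`. -/
def w51 (a : ℝ) : ℝ := 2 * a^5 + 2 * (1/2 - a)^5

/-! The polynomial `20 w31 - 144 w51 + 80 w31²` in `a` is the constant `1`. Each of `G₃₁`, `G₅₁`,
`G̃₆₃`, `G₀₀` is the `b`-weighted sum of a function of `a`, so the same combination of the first
three equals `G₀₀`. -/

theorem w31_w51_relation (a : ℝ) : 20 * w31 a - 144 * w51 a + 80 * w31 a ^ 2 = 1 := by
  unfold w31 w51
  ring

theorem w31_w51_weighted_sum_relation {ι : Type*} (s : Finset ι) (b a : ι → ℝ) :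
    20 * ∑ i ∈ s, b i * w31 (a i) - 144 * ∑ i ∈ s, b i * w51 (a i)
      + 80 * ∑ i ∈ s, b i * w31 (a i) ^ 2 = ∑ i ∈ s, b i := by
  simp only [mul_sum, ← sum_sub_distrib, ← sum_add_distrib]
  exact sum_congr rfl fun i _ => by linear_combination b i * w31_w51_relation (a i)

/-- Fifth-order barrier for symmetric 4-stage linear combinations: whenever
`G₀₀ = ∑ bᵢ = 1` one has `20 G₃₁ - 144 G₅₁ + 80 G̃₆₃ = 1`; in particular
`G₃₁`, `G₅₁` and `G̃₆₃` cannot vanish simultaneously. -/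
theorem four_stage_fifth_order_barrier (k : ℕ) (b a : Fin k → ℝ)
    (h00 : ∑ i, b i = 1) :
    (20 * (∑ i, b i * w31 (a i)) - 144 * (∑ i, b i * w51 (a i))
        + 80 * (∑ i, b i * (w31 (a i))^2) = 1) ∧
    ¬ ((∑ i, b i * w31 (a i)) = 0 ∧ (∑ i, b i * w51 (a i)) = 0 ∧
        (∑ i, b i * (w31 (a i))^2) = 0) := by
  have barrier := (w31_w51_weighted_sum_relation univ b a).trans h00
  refine ⟨barrier, ?_⟩
  rintro ⟨h31, h51, h63⟩
  rw [h31, h51, h63] at barrier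
  norm_num at barrier
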